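/- arXiv:1805.05189 — 2 statements merged into one kernel-verified Lean document; each statement's English description precedes it below -/
import Mathlib

section
/- Let f : ℝ → ℝ be convex and L₀-Lipschitz, and let Z be uniform on [−1,1]. Then f_a(x) = E[f(x + aZ)] is differentiable with f_a'(x) = (f(x+a) − f(x−a))/(2a), and f_a' is (L₀/a)-Lipschitz. -/
open scoped NNReal

/-! Writing `G` for an antiderivative of the continuous function `f`, the smoothing is
`f_a x = (G (x + a) - G (x - a)) / (2a)`, so the fundamental theorem of calculus gives the
derivative. Each of `f (· + a)` and `f (· - a)` is `L₀`-Lipschitz, so their difference is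
`2 L₀`-Lipschitz, and dividing by `2a` gives the constant `L₀ / a`. -/

theorem Continuous.hasDerivAt_integral_sub_add {E : Type*} [NormedAddCommGroup E]
    [NormedSpace ℝ E] [CompleteSpace E] {f : ℝ → E} (hf : Continuous f) (a x : ℝ) :
    HasDerivAt (fun x => ∫ t in (x - a)..(x + a), f t) (f (x + a) - f (x - a)) x := by
  have hsplit : (fun x => ∫ t in (x - a)..(x + a), f t) =
      fun x => (∫ t in (0 : ℝ)..(x + a), f t) - ∫ t in (0 : ℝ)..(x - a), f t := by
    funext x
    exact (intervalIntegral.integral_interval_sub_left (hf.intervalIntegrable _ _)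
      (hf.intervalIntegrable _ _)).symm
  rw [hsplit]
  exact ((hf.integral_hasStrictDerivAt 0 (x + a)).hasDerivAt.comp_add_const x a).sub
    ((hf.integral_hasStrictDerivAt 0 (x - a)).hasDerivAt.comp_sub_const x a)

theorem LipschitzWith.sub_comp_add_sub {G E : Type*} [SeminormedAddCommGroup G]
    [SeminormedAddCommGroup E] {L : ℝ≥0} {f : G → E} (hf : LipschitzWith L f) (a : G) :
    LipschitzWith (2 * L) fun x => f (x + a) - f (x - a) := by
  have := (hf.comp (isometry_add_right a).lipschitz).sub
    (hf.comp (isometry_add_right (-a)).lipschitz)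
  simpa only [mul_one, ← two_mul, ← sub_eq_add_neg, Function.comp_apply] using this

theorem smoothing_one_dim_deriv_general
    (f : ℝ → ℝ)
    (L₀ : ℝ≥0) (hLip : LipschitzWith L₀ f)
    (a : ℝ) (ha : 0 < a)
    (fa : ℝ → ℝ) (hfa : ∀ x, fa x = (1 / (2 * a)) * ∫ t in (x - a)..(x + a), f t) :
    (∀ x, HasDerivAt fa ((f (x + a) - f (x - a)) / (2 * a)) x) ∧
      (∀ x y, |(f (x + a) - f (x - a)) / (2 * a) - (f (y + a) - f (y - a)) / (2 * a)|
        ≤ (L₀ / a) * |x - y|) := by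
  have h2a : 0 < 2 * a := by positivity
  refine ⟨fun x => ?_, fun x y => ?_⟩
  · rw [funext hfa]
    simpa only [one_div_mul_eq_div] using
      (hLip.continuous.hasDerivAt_integral_sub_add a x).const_mul (1 / (2 * a))
  · have hdiff := (hLip.sub_comp_add_sub a).dist_le_mul x y
    simp only [Real.dist_eq, NNReal.coe_mul, NNReal.coe_ofNat] at hdiff
    rw [div_sub_div_same, abs_div, abs_of_pos h2a, div_le_iff₀ h2a]
    calc _ ≤ 2 * L₀ * |x - y| := hdiff
      _ = L₀ / a * |x - y| * (2 * a) := by field_simp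

/-- For `f : ℝ → ℝ` convex and `L₀`-Lipschitz, `a > 0`, and `Z` uniform on `[-1,1]`,
the smoothed function `f_a x = (1/(2a)) ∫_{x-a}^{x+a} f` is differentiable with
derivative `(f (x+a) - f (x-a)) / (2a)`, and this derivative is `(L₀/a)`-Lipschitz. -/
theorem smoothing_one_dim_deriv
    (f : ℝ → ℝ) (hf : ConvexOn ℝ Set.univ f)
    (L₀ : ℝ≥0) (hLip : LipschitzWith L₀ f)
    (a : ℝ) (ha : 0 < a)
    (fa : ℝ → ℝ) (hfa : ∀ x, fa x = (1 / (2 * a)) * ∫ t in (x - a)..(x + a), f t) :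
    (∀ x, HasDerivAt fa ((f (x + a) - f (x - a)) / (2 * a)) x) ∧
      (∀ x y, |(f (x + a) - f (x - a)) / (2 * a) - (f (y + a) - f (y - a)) / (2 * a)|
        ≤ (L₀ / a) * |x - y|) :=
  smoothing_one_dim_deriv_general f L₀ hLip a ha fa hfa
end

section
/- Let f₁,…,f_N : ℝ^d → ℝ each be convex with L-Lipschitz gradient, let F = (1/N)·Σᵢ fᵢ, and let x* minimize F + R where R is convex (with 0 ∈ ∂(F+R)(x*) and each ∇fᵢ(x*) need not vanish). Suppose additionally ‖∇fᵢ(x*)‖₂ ≤ G for all i. Then (1/N)·Σᵢ ‖∇fᵢ(x) − ∇fᵢ(x*)‖₂² ≤ 2L·(F(x) − F(x*) − ⟨∇F(x*), x − x*⟩). -/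
/-!
For a convex `f` with `L`-Lipschitz gradient `g`, the tilted function `f - ⟪g y, ·⟫` is convex
and minimised at `y`, while the descent lemma says one gradient step of length `1/L` from `x`
lowers it by at least `‖g x - g y‖² / (2L)`. This is co-coercivity
`‖g x - g y‖² ≤ 2L (f x - f y - ⟪g y, x - y⟫)`; averaging it over the `fᵢ` gives the theorem,
because `∇F x*` is the average of the `gᵢ x*`.
-/

open scoped RealInnerProductSpace

section

variable {E : Type*} [NormedAddCommGroup E] [InnerProductSpace ℝ E] [CompleteSpace E]
  {f : E → ℝ} {g : E → E} {f' a v : E} {L : ℝ}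

theorem HasGradientAt.hasDerivAt_comp_add_smul {t : ℝ} (h : HasGradientAt f f' (a + t • v)) :
    HasDerivAt (fun s : ℝ ↦ f (a + s • v)) ⟪f', v⟫ t := by
  have hline : HasDerivAt (fun s : ℝ ↦ a + s • v) v t := by
    simpa using ((hasDerivAt_id t).smul_const v).const_add a
  simpa [Function.comp_def] using h.hasFDerivAt.comp_hasDerivAt t hline

theorem ConvexOn.add_inner_gradient_le (hf : ConvexOn ℝ Set.univ f) (h : HasGradientAt f f' a)
    (b : E) : f a + ⟪f', b - a⟫ ≤ f b := by
  have hline : (fun s : ℝ ↦ f (a + s • (b - a))) = f ∘ AffineMap.lineMap a b := by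
    ext s; simp [AffineMap.lineMap_apply, add_comm]
  have hconv : ConvexOn ℝ Set.univ fun s : ℝ ↦ f (a + s • (b - a)) := by
    rw [hline]; simpa using hf.comp_affineMap (AffineMap.lineMap a b)
  have hderiv := (show HasGradientAt f f' (a + (0 : ℝ) • (b - a)) by simpa).hasDerivAt_comp_add_smul
  have := hconv.le_slope_of_hasDerivAt trivial trivial one_pos hderiv
  simp only [slope_def_field, one_smul, zero_smul, add_zero, add_sub_cancel] at this
  linarith

theorem le_add_inner_add_sq_of_lipschitz_gradient (hgrad : ∀ x, HasGradientAt f (g x) x)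
    (hLip : ∀ x y, ‖g x - g y‖ ≤ L * ‖x - y‖) (a b : E) :
    f b ≤ f a + ⟪g a, b - a⟫ + L / 2 * ‖b - a‖ ^ 2 := by
  set v := b - a
  let φ : ℝ → ℝ := fun t ↦ f (a + t • v) - ⟪g a, v⟫ * t - L / 2 * ‖v‖ ^ 2 * t ^ 2
  have hφ : ∀ t, HasDerivAt φ (⟪g (a + t • v), v⟫ - ⟪g a, v⟫ - L * ‖v‖ ^ 2 * t) t := by
    intro t
    have := ((hgrad (a + t • v)).hasDerivAt_comp_add_smul.sub
      ((hasDerivAt_id t).const_mul ⟪g a, v⟫)).sub ((hasDerivAt_pow 2 t).const_mul (L / 2 * ‖v‖ ^ 2))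
    exact this.congr_deriv (by simp; ring)
  have hφ' : ∀ t ∈ interior (Set.Ici (0 : ℝ)),
      ⟪g (a + t • v), v⟫ - ⟪g a, v⟫ - L * ‖v‖ ^ 2 * t ≤ 0 := by
    intro t ht
    rw [interior_Ici] at ht
    rw [sub_nonpos]
    calc ⟪g (a + t • v), v⟫ - ⟪g a, v⟫ = ⟪g (a + t • v) - g a, v⟫ := (inner_sub_left ..).symm
      _ ≤ ‖g (a + t • v) - g a‖ * ‖v‖ := real_inner_le_norm _ _
      _ ≤ L * ‖t • v‖ * ‖v‖ := by gcongr; simpa using hLip (a + t • v) a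
      _ = L * ‖v‖ ^ 2 * t := by rw [norm_smul, Real.norm_of_nonneg ht.le]; ring
  have hanti : AntitoneOn φ (Set.Ici 0) :=
    antitoneOn_of_hasDerivWithinAt_nonpos (convex_Ici 0)
      (fun t _ ↦ (hφ t).continuousAt.continuousWithinAt) (fun t _ ↦ (hφ t).hasDerivWithinAt) hφ'
  have := hanti Set.self_mem_Ici (Set.mem_Ici.2 zero_le_one) zero_le_one
  simp only [φ, one_smul, zero_smul, add_zero, v, add_sub_cancel] at this
  linarith

theorem ConvexOn.sq_norm_gradient_sub_le (hf : ConvexOn ℝ Set.univ f)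
    (hgrad : ∀ x, HasGradientAt f (g x) x) (hL : 0 ≤ L)
    (hLip : ∀ x y, ‖g x - g y‖ ≤ L * ‖x - y‖) (x y : E) :
    ‖g x - g y‖ ^ 2 ≤ 2 * L * (f x - f y - ⟪g y, x - y⟫) := by
  rcases hL.eq_or_lt with rfl | hL
  · have : g x - g y = 0 := norm_le_zero_iff.1 (by simpa using hLip x y)
    simp [this]
  set u := g x - g y
  set z := x - L⁻¹ • u
  have hupper := le_add_inner_add_sq_of_lipschitz_gradient hgrad hLip x z
  have hlower := hf.add_inner_gradient_le (hgrad y) z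
  have hzx : z - x = -(L⁻¹ • u) := by simp [z]
  have hzy : z - y = (x - y) - L⁻¹ • u := by simp only [z]; abel
  rw [hzx, inner_neg_right, real_inner_smul_right, norm_neg, norm_smul, Real.norm_of_nonneg
    (inv_nonneg.2 hL.le)] at hupper
  rw [hzy, inner_sub_right, real_inner_smul_right] at hlower
  have key : L⁻¹ * ‖u‖ ^ 2 / 2 ≤ f x - f y - ⟪g y, x - y⟫ := by
    have hsq : L / 2 * (L⁻¹ * ‖u‖) ^ 2 = L⁻¹ * ‖u‖ ^ 2 / 2 := by field_simp
    have hinner : L⁻¹ * ⟪g x, u⟫ - L⁻¹ * ⟪g y, u⟫ = L⁻¹ * ‖u‖ ^ 2 := by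
      rw [← mul_sub, ← inner_sub_left, real_inner_self_eq_norm_sq]
    linarith
  calc ‖u‖ ^ 2 = 2 * L * (L⁻¹ * ‖u‖ ^ 2 / 2) := by field_simp
    _ ≤ _ := by gcongr

end

theorem avg_grad_sq_le_general
    {d N : ℕ}
    (f : Fin N → EuclideanSpace ℝ (Fin d) → ℝ)
    (hf : ∀ i, ConvexOn ℝ Set.univ (f i))
    (g : Fin N → EuclideanSpace ℝ (Fin d) → EuclideanSpace ℝ (Fin d))
    (hgrad : ∀ i x, HasGradientAt (f i) (g i x) x)
    (L : ℝ) (hL : 0 ≤ L)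
    (hLip : ∀ i x y, ‖g i x - g i y‖ ≤ L * ‖x - y‖)
    (F : EuclideanSpace ℝ (Fin d) → ℝ) (hF : ∀ x, F x = (1 / (N : ℝ)) * ∑ i, f i x)
    (xs : EuclideanSpace ℝ (Fin d))
    (x : EuclideanSpace ℝ (Fin d)) :
    (1 / (N : ℝ)) * ∑ i, ‖g i x - g i xs‖ ^ 2
      ≤ 2 * L * (F x - F xs - ⟪(N : ℝ)⁻¹ • ∑ i, g i xs, x - xs⟫) := by
  calc (1 / (N : ℝ)) * ∑ i, ‖g i x - g i xs‖ ^ 2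
      ≤ (1 / (N : ℝ)) * ∑ i, 2 * L * (f i x - f i xs - ⟪g i xs, x - xs⟫) := by
        gcongr with i
        exact (hf i).sq_norm_gradient_sub_le (hgrad i) hL (hLip i) x xs
    _ = 2 * L * (F x - F xs - ⟪(N : ℝ)⁻¹ • ∑ i, g i xs, x - xs⟫) := by
        simp only [hF, real_inner_smul_left, sum_inner, ← Finset.mul_sum,
          Finset.sum_sub_distrib]
        ring

/-- Averaged co-coercivity: for convex `fᵢ` with `L`-Lipschitz gradients `gᵢ`,
`F = (1/N) Σ fᵢ`, and a point `x*` with `‖gᵢ x*‖ ≤ G`, one has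
`(1/N) Σᵢ ‖gᵢ x - gᵢ x*‖² ≤ 2L (F x - F x* - ⟪∇F x*, x - x*⟫)`. -/
theorem avg_grad_sq_le
    {d N : ℕ} (hN : 0 < N)
    (f : Fin N → EuclideanSpace ℝ (Fin d) → ℝ)
    (hf : ∀ i, ConvexOn ℝ Set.univ (f i))
    (g : Fin N → EuclideanSpace ℝ (Fin d) → EuclideanSpace ℝ (Fin d))
    (hgrad : ∀ i x, HasGradientAt (f i) (g i x) x)
    (L : ℝ) (hL : 0 ≤ L)
    (hLip : ∀ i x y, ‖g i x - g i y‖ ≤ L * ‖x - y‖)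
    (F : EuclideanSpace ℝ (Fin d) → ℝ) (hF : ∀ x, F x = (1 / (N : ℝ)) * ∑ i, f i x)
    (xs : EuclideanSpace ℝ (Fin d))
    (G : ℝ) (hG : ∀ i, ‖g i xs‖ ≤ G)
    (x : EuclideanSpace ℝ (Fin d)) :
    (1 / (N : ℝ)) * ∑ i, ‖g i x - g i xs‖ ^ 2
      ≤ 2 * L * (F x - F xs - ⟪(N : ℝ)⁻¹ • ∑ i, g i xs, x - xs⟫) :=
  avg_grad_sq_le_general f hf g hgrad L hL hLip F hF xs x
end
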